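/- Let 0 < α ≤ 1 and ε > 0. Then for every t > 0, E_{α,1}(−(t/ε)^α) + ε^{−α} · (1/Γ(α)) · ∫_0^t (t−s)^{α−1} E_{α,1}(−(s/ε)^α) ds = 1. -/

import Mathlib

open Real MeasureTheory Set Filter
open scoped Nat

lemma summable_ml {α b : ℝ} (hα : 0 < α) (hb : 0 < b) {y : ℝ} (hy : 0 ≤ y) :
    Summable (fun k : ℕ => y ^ k / Real.Gamma (α * k + b)) := by
  set C : ℝ := (2 * y + 1) ^ (α⁻¹) with hC
  have hC0 : 0 < C := Real.rpow_pos_of_pos (by linarith) _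
  have hC1 : 1 ≤ C := Real.one_le_rpow (by linarith) (by positivity)
  have hCα : C ^ α = 2 * y + 1 := Real.rpow_inv_rpow (by linarith) hα.ne'
  -- eventually C^n ≤ n!
  obtain ⟨N, hN⟩ : ∃ N : ℕ, ∀ n ≥ N, C ^ n ≤ (n ! : ℝ) := by
    have h := FloorSemiring.tendsto_pow_div_factorial_atTop (K := ℝ) C
    have h2 : ∀ᶠ n : ℕ in atTop, C ^ n / (n ! : ℝ) < 1 :=
      h.eventually_lt_const (by norm_num)
    obtain ⟨N, hN⟩ := h2.exists_forall_of_atTop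
    exact ⟨N, fun n hn => by
      have := hN n hn
      have hfac : (0:ℝ) < n ! := by positivity
      nlinarith [(div_lt_one hfac).mp this]⟩
  -- key bound for large arguments
  have key : ∀ k : ℕ, (N : ℝ) + 3 ≤ α * k + b →
      y ^ k / Real.Gamma (α * k + b) ≤ C ^ (2 - b) * (2⁻¹ : ℝ) ^ k := by
    intro k hk
    set z : ℝ := α * k + b with hz
    have hz0 : 0 ≤ z := by nlinarith [(Nat.cast_nonneg N : (0:ℝ) ≤ N)]
    have hz2 : (2:ℝ) ≤ z := by nlinarith [(Nat.cast_nonneg N : (0:ℝ) ≤ N)]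
    have hfl : N + 3 ≤ ⌊z⌋₊ := Nat.le_floor (by push_cast; linarith)
    set n : ℕ := ⌊z⌋₊ - 1 with hn
    have hfl1 : 1 ≤ ⌊z⌋₊ := by omega
    have hcastn : (n : ℝ) = (⌊z⌋₊ : ℝ) - 1 := by
      rw [hn, Nat.cast_sub hfl1]; norm_num
    have hn1 : (n : ℝ) + 1 ≤ z := by
      rw [hcastn]; have := Nat.floor_le hz0; linarith
    have hn2 : (2:ℝ) ≤ (n : ℝ) + 1 := by
      rw [hcastn]
      have : (3:ℝ) ≤ (⌊z⌋₊ : ℝ) := by exact_mod_cast le_trans (by omega) hfl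
      linarith
    have hzn : z - 2 ≤ (n : ℝ) := by
      rw [hcastn]; have := Nat.lt_floor_add_one z; linarith
    have hNn : N ≤ n := by omega
    have hmono : Real.Gamma ((n : ℝ) + 1) ≤ Real.Gamma z :=
      Real.Gamma_strictMonoOn_Ici.monotoneOn (by exact hn2) (by exact le_trans hn2 hn1) hn1
    have hfac : (n ! : ℝ) ≤ Real.Gamma z := by
      rwa [Real.Gamma_nat_eq_factorial] at hmono
    have hpow : C ^ (z - 2) ≤ Real.Gamma z := by
      calc C ^ (z - 2) ≤ C ^ (n : ℝ) := Real.rpow_le_rpow_of_exponent_le hC1 hzn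
        _ = C ^ n := by rw [Real.rpow_natCast]
        _ ≤ (n ! : ℝ) := hN n hNn
        _ ≤ _ := hfac
    have hsplit : C ^ (z - 2) = (2 * y + 1) ^ k * C ^ (b - 2) := by
      have : z - 2 = α * k + (b - 2) := by rw [hz]; ring
      rw [this, Real.rpow_add hC0]
      congr 1
      rw [Real.rpow_mul hC0.le, hCα, Real.rpow_natCast]
    have hpos : (0:ℝ) < (2 * y + 1) ^ k * C ^ (b - 2) := by positivity
    have h1 : y ^ k / Real.Gamma z ≤ y ^ k / ((2 * y + 1) ^ k * C ^ (b - 2)) :=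
      div_le_div_of_nonneg_left (by positivity) hpos (by rw [← hsplit]; exact hpow)
    calc y ^ k / Real.Gamma z ≤ y ^ k / ((2 * y + 1) ^ k * C ^ (b - 2)) := h1
      _ = (y / (2 * y + 1)) ^ k * C ^ (2 - b) := by
          have h2b : C ^ (2 - b) = (C ^ (b - 2))⁻¹ := by
            rw [show (2:ℝ) - b = -(b - 2) by ring, Real.rpow_neg hC0.le]
          rw [div_pow, h2b]
          field_simp
      _ ≤ (2⁻¹ : ℝ) ^ k * C ^ (2 - b) := by
          have hhalf : y / (2 * y + 1) ≤ (2⁻¹ : ℝ) :=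
            (div_le_iff₀ (by linarith : (0:ℝ) < 2 * y + 1)).2 (by linarith)
          have hb0 : (0:ℝ) ≤ y / (2 * y + 1) := by positivity
          gcongr
      _ = C ^ (2 - b) * (2⁻¹ : ℝ) ^ k := by ring
  set K : ℕ := ⌈((N : ℝ) + 3) / α⌉₊ with hK
  refine (summable_nat_add_iff K).1 ?_
  have hgeo : Summable (fun k : ℕ => C ^ (2 - b) * (2⁻¹ : ℝ) ^ k) :=
    (summable_geometric_of_lt_one (by norm_num) (by norm_num)).mul_left _
  refine Summable.of_nonneg_of_le (fun k => by positivity) (fun k => ?_) hgeo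
  have hKk : (N : ℝ) + 3 ≤ α * ((k : ℝ) + K) + b := by
    have h1 : ((N : ℝ) + 3) / α ≤ (K : ℝ) := Nat.le_ceil _
    have h2 : (N : ℝ) + 3 ≤ α * K := by
      rw [div_le_iff₀ hα] at h1; linarith [mul_comm α (K:ℝ)]
    nlinarith [(Nat.cast_nonneg k : (0:ℝ) ≤ k)]
  have hkey := key (k + K) (by push_cast; push_cast at hKk; linarith)
  refine le_trans hkey ?_
  have : ((2:ℝ)⁻¹) ^ (k + K) ≤ (2⁻¹ : ℝ) ^ k :=
    Bound.pow_le_pow_right_of_le_one_or_one_le (Or.inr ⟨by norm_num, by norm_num, Nat.le_add_right k K⟩)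
  have hCb : (0:ℝ) ≤ C ^ (2 - b) := by positivity
  nlinarith


lemma beta_aux (a c t : ℝ) (ha : 0 < a) (hc : 0 ≤ c) (ht : 0 < t) :
    IntegrableOn (fun s : ℝ => s ^ c * (t - s) ^ (a - 1)) (Ioc 0 t) volume ∧
    ∫ s in Ioc (0:ℝ) t, s ^ c * (t - s) ^ (a - 1) =
      Real.Gamma a * Real.Gamma (c + 1) / Real.Gamma (a + c + 1) * t ^ (a + c) := by
  set b : ℝ := c + 1 with hbdef
  have hb : 0 < b := by positivity
  set G : ℝ → ℂ := fun x => (x : ℂ) ^ ((b : ℂ) - 1) * ((t : ℂ) - x) ^ ((a : ℂ) - 1) with hGdef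
  -- integrability of G on Ioc 0 t
  have h1 : IntervalIntegrable (fun x : ℝ => (x : ℂ) ^ ((b : ℂ) - 1) * ((1 : ℂ) - x) ^ ((a : ℂ) - 1))
      volume 0 1 := Complex.betaIntegral_convergent (by simpa using hb) (by simpa using ha)
  have h2 := h1.comp_mul_left (c := t⁻¹)
  have h2' : IntegrableOn
      (fun x : ℝ => ((t⁻¹ * x : ℝ) : ℂ) ^ ((b : ℂ) - 1) * ((1 : ℂ) - (t⁻¹ * x : ℝ)) ^ ((a : ℂ) - 1))
      (Ioc 0 t) volume := by
    have h0 : (0:ℝ) / t⁻¹ = 0 := by simp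
    have h1' : (1:ℝ) / t⁻¹ = t := by field_simp
    rw [h0, h1'] at h2
    rw [intervalIntegrable_iff, uIoc_of_le ht.le] at h2
    exact h2
  have hGion : IntegrableOn G (Ioc 0 t) volume := by
    set K : ℂ := (t : ℂ) ^ ((b : ℂ) - 1) * (t : ℂ) ^ ((a : ℂ) - 1) with hK
    refine (h2'.const_mul K).congr ?_
    refine ((ae_restrict_iff' measurableSet_Ioc).2 (ae_of_all _ fun x hx => ?_))
    obtain ⟨hx0, hxt⟩ := hx
    have hx0' : (0:ℝ) ≤ t⁻¹ * x := by positivity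
    have hx1' : (0:ℝ) ≤ 1 - t⁻¹ * x := by
      rw [sub_nonneg, inv_mul_le_iff₀ ht, mul_one]; exact hxt
    have e1 : (x : ℂ) = ((t * (t⁻¹ * x) : ℝ) : ℂ) := by
      rw [mul_inv_cancel_left₀ ht.ne']
    have e2 : ((t : ℂ) - x) = ((t * (1 - t⁻¹ * x) : ℝ) : ℂ) := by
      rw [show t * (1 - t⁻¹ * x) = t - x by field_simp]
      push_cast
      ring
    show K * _ = G x
    rw [hGdef]
    simp only
    have f1 : (x : ℂ) ^ ((b : ℂ) - 1) =
        (t : ℂ) ^ ((b : ℂ) - 1) * ((t⁻¹ * x : ℝ) : ℂ) ^ ((b : ℂ) - 1) := by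
      rw [e1, Complex.ofReal_mul, Complex.mul_cpow_ofReal_nonneg ht.le hx0']
    have f2 : ((t : ℂ) - x) ^ ((a : ℂ) - 1) =
        (t : ℂ) ^ ((a : ℂ) - 1) * ((1 - t⁻¹ * x : ℝ) : ℂ) ^ ((a : ℂ) - 1) := by
      rw [e2, Complex.ofReal_mul, Complex.mul_cpow_ofReal_nonneg ht.le hx1']
    rw [f1, f2, hK]
    push_cast
    ring
  -- pointwise identification of G with the real integrand
  have hG_eq : ∀ x ∈ Ioc (0:ℝ) t, G x = ((x ^ c * (t - x) ^ (a - 1) : ℝ) : ℂ) := by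
    intro x hx
    obtain ⟨hx0, hxt⟩ := hx
    have e1 : ((b : ℂ) - 1) = ((c : ℝ) : ℂ) := by rw [hbdef]; push_cast; ring
    have e2 : ((a : ℂ) - 1) = (((a - 1 : ℝ)) : ℂ) := by push_cast; ring
    have e3 : ((t : ℂ) - x) = (((t - x : ℝ)) : ℂ) := by push_cast; ring
    rw [hGdef]
    simp only
    rw [e1, e2, e3, ← Complex.ofReal_cpow hx0.le, ← Complex.ofReal_cpow (by linarith),
      ← Complex.ofReal_mul]
  have hae : (fun x => (G x).re) =ᵐ[volume.restrict (Ioc 0 t)]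
      (fun x : ℝ => x ^ c * (t - x) ^ (a - 1)) := by
    refine (ae_restrict_iff' measurableSet_Ioc).2 (ae_of_all _ fun x hx => ?_)
    show (G x).re = x ^ c * (t - x) ^ (a - 1)
    rw [hG_eq x hx, Complex.ofReal_re]
  have hfi : IntegrableOn (fun s : ℝ => s ^ c * (t - s) ^ (a - 1)) (Ioc 0 t) volume :=
    (Complex.reCLM.integrable_comp hGion).congr hae
  refine ⟨hfi, ?_⟩
  -- value of ∫ G
  have hb' : 0 < Complex.re (b : ℂ) := by simpa using hb
  have ha' : 0 < Complex.re (a : ℂ) := by simpa using ha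
  have hGamma_ne : Complex.Gamma ((b : ℂ) + (a : ℂ)) ≠ 0 := by
    rw [← Complex.ofReal_add, Complex.Gamma_ofReal]
    exact_mod_cast (Real.Gamma_pos_of_pos (by linarith)).ne'
  have hbeta : Complex.betaIntegral (b : ℂ) (a : ℂ) =
      Complex.Gamma (b : ℂ) * Complex.Gamma (a : ℂ) / Complex.Gamma ((b : ℂ) + (a : ℂ)) := by
    have h3 := Complex.Gamma_mul_Gamma_eq_betaIntegral hb' ha'
    field_simp [hGamma_ne] at h3 ⊢
    rw [h3]
  have hval : ∫ x in Ioc (0:ℝ) t, G x =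
      (t : ℂ) ^ ((b : ℂ) + (a : ℂ) - 1) * Complex.betaIntegral (b : ℂ) (a : ℂ) := by
    rw [← intervalIntegral.integral_of_le ht.le]
    exact Complex.betaIntegral_scaled (b : ℂ) (a : ℂ) ht
  have : ∫ s in Ioc (0:ℝ) t, s ^ c * (t - s) ^ (a - 1) = (∫ x in Ioc (0:ℝ) t, G x).re := by
    rw [← integral_congr_ae hae]
    exact Complex.reCLM.integral_comp_comm hGion
  rw [this, hval, hbeta]
  have e4 : ((b : ℂ) + (a : ℂ) - 1) = (((a + c : ℝ)) : ℂ) := by rw [hbdef]; push_cast; ring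
  have e5 : ((b : ℂ) + (a : ℂ)) = (((a + c + 1 : ℝ)) : ℂ) := by rw [hbdef]; push_cast; ring
  have e6 : (t : ℂ) ^ ((b : ℂ) + (a : ℂ) - 1) *
      (Complex.Gamma (b : ℂ) * Complex.Gamma (a : ℂ) / Complex.Gamma ((b : ℂ) + (a : ℂ))) =
      ((Real.Gamma a * Real.Gamma (c + 1) / Real.Gamma (a + c + 1) * t ^ (a + c) : ℝ) : ℂ) := by
    rw [e4, e5, ← Complex.ofReal_cpow ht.le, Complex.Gamma_ofReal, Complex.Gamma_ofReal,
      Complex.Gamma_ofReal, hbdef]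
    push_cast
    ring
  rw [e6, Complex.ofReal_re]

/-- The generalized Mittag-Leffler function `E_{a,b}(x) = ∑ₖ xᵏ / Γ(a k + b)`. -/
noncomputable def mittagLeffler (a b x : ℝ) : ℝ :=
  ∑' k : ℕ, x ^ k / Real.Gamma (a * k + b)

/-- Resolvent identity for the GFE II kernel: for `0 < α ≤ 1`, `ε > 0` and `t > 0`,
`E_{α,1}(−(t/ε)^α) + ε^{−α} (1/Γ(α)) ∫₀ᵗ (t−s)^{α−1} E_{α,1}(−(s/ε)^α) ds = 1`. -/
theorem resolvent_identity_GFEII (α ε : ℝ) (hα : 0 < α) (hα1 : α ≤ 1) (hε : 0 < ε)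
    (t : ℝ) (ht : 0 < t) :
    mittagLeffler α 1 (-((t / ε) ^ α)) +
      ε ^ (-α) * (1 / Real.Gamma α) *
        ∫ s in (0 : ℝ)..t, (t - s) ^ (α - 1) * mittagLeffler α 1 (-((s / ε) ^ α)) = 1 := by
  have hΓα : 0 < Real.Gamma α := Real.Gamma_pos_of_pos hα
  set T : ℝ := t ^ α with hT
  set E : ℝ := ε ^ α with hE
  have hT0 : 0 < T := Real.rpow_pos_of_pos ht α
  have hE0 : 0 < E := Real.rpow_pos_of_pos hε α
  set y : ℝ := T / E with hy
  have hy0 : 0 ≤ y := by positivity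
  have hdiv : ∀ s : ℝ, 0 ≤ s → (s / ε) ^ α = s ^ α / E := fun s hs => Real.div_rpow hs hε.le α
  set f : ℕ → ℝ → ℝ :=
    fun k s => (t - s) ^ (α - 1) * ((-((s / ε) ^ α)) ^ k / Real.Gamma (α * k + 1)) with hf
  have hΓk : ∀ k : ℕ, 0 < Real.Gamma (α * k + 1) := fun k =>
    Real.Gamma_pos_of_pos (by positivity)
  have hΓA : ∀ k : ℕ, 0 < Real.Gamma (α + α * k + 1) := fun k =>
    Real.Gamma_pos_of_pos (by positivity)
  -- pointwise description on the interval
  have hpt : ∀ k : ℕ, ∀ s ∈ Ioc (0:ℝ) t, f k s =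
      ((-1 : ℝ) ^ k / (E ^ k * Real.Gamma (α * k + 1))) * (s ^ (α * k) * (t - s) ^ (α - 1)) := by
    intro k s hs
    obtain ⟨hs0, hst⟩ := hs
    have h2 : s ^ (α * (k:ℝ)) = (s ^ α) ^ k := by
      rw [Real.rpow_mul hs0.le, Real.rpow_natCast]
    rw [hf]
    simp only
    rw [hdiv s hs0.le, neg_pow, div_pow, h2]
    field_simp
  -- integrability of each summand
  have hint : ∀ k : ℕ, Integrable (f k) (volume.restrict (Ioc (0:ℝ) t)) := by
    intro k
    refine (((beta_aux α (α * k) t hα (by positivity) ht).1.const_mul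
      ((-1 : ℝ) ^ k / (E ^ k * Real.Gamma (α * k + 1)))).congr ?_)
    exact (ae_restrict_iff' measurableSet_Ioc).2 (ae_of_all _ fun s hs => (hpt k s hs).symm)
  -- value of each integral
  have hIk : ∀ k : ℕ, ∫ s in Ioc (0:ℝ) t, f k s =
      -(Real.Gamma α * E * ((-y) ^ (k+1) / Real.Gamma (α * ((k:ℝ) + 1) + 1))) := by
    intro k
    rw [setIntegral_congr_fun measurableSet_Ioc (fun s hs => hpt k s hs),
      integral_const_mul, (beta_aux α (α * k) t hα (by positivity) ht).2]
    have hAeq : α + α * (k:ℝ) + 1 = α * ((k:ℝ) + 1) + 1 := by ring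
    have hTk : t ^ (α + α * (k:ℝ)) = T * T ^ k := by
      rw [Real.rpow_add ht, Real.rpow_mul ht.le, Real.rpow_natCast]
    have hyk : (-y) ^ (k+1) = (-1 : ℝ) ^ (k+1) * (T ^ (k+1) / E ^ (k+1)) := by
      rw [hy, neg_pow, div_pow]
    have h1 := (hΓk k).ne'
    have h2 : Real.Gamma (α * ((k:ℝ) + 1) + 1) ≠ 0 :=
      (Real.Gamma_pos_of_pos (by positivity)).ne'
    rw [hAeq, hTk, hyk]
    field_simp
    ring
  -- value of the norm integrals
  have hNk : ∀ k : ℕ, (∫ s in Ioc (0:ℝ) t, ‖f k s‖) =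
      (Real.Gamma α * T) * (y ^ k / Real.Gamma (α * (k:ℝ) + (α + 1))) := by
    intro k
    have hptn : ∀ s ∈ Ioc (0:ℝ) t, ‖f k s‖ =
        ((E ^ k * Real.Gamma (α * k + 1))⁻¹) * (s ^ (α * k) * (t - s) ^ (α - 1)) := by
      intro s hs
      obtain ⟨hs0, hst⟩ := hs
      rw [hpt k s ⟨hs0, hst⟩, Real.norm_eq_abs, abs_mul, abs_div, abs_pow, abs_neg, abs_one, one_pow,
        abs_of_pos (by positivity : (0:ℝ) < E ^ k * Real.Gamma (α * k + 1)),
        abs_of_nonneg (mul_nonneg (Real.rpow_nonneg hs0.le _) (Real.rpow_nonneg (by linarith) _))]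
      ring
    rw [setIntegral_congr_fun measurableSet_Ioc hptn, integral_const_mul,
      (beta_aux α (α * k) t hα (by positivity) ht).2]
    have hAeq : α + α * (k:ℝ) + 1 = α * (k:ℝ) + (α + 1) := by ring
    have hTk : t ^ (α + α * (k:ℝ)) = T * T ^ k := by
      rw [Real.rpow_add ht, Real.rpow_mul ht.le, Real.rpow_natCast]
    have hyk : y ^ k = T ^ k / E ^ k := div_pow T E k
    rw [hAeq, hTk, hyk]
    have h1 := (hΓk k).ne'
    have h2 : Real.Gamma (α * (k:ℝ) + (α + 1)) ≠ 0 :=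
      (Real.Gamma_pos_of_pos (by positivity)).ne'
    field_simp
  -- summability of the norm integrals
  have hsum : Summable (fun k : ℕ => ∫ s in Ioc (0:ℝ) t, ‖f k s‖) :=
    ((summable_ml hα (by linarith : (0:ℝ) < α + 1) hy0).mul_left
      (Real.Gamma α * T)).congr fun k => (hNk k).symm
  -- swap sum and integral
  have hswap : ∫ s in Ioc (0:ℝ) t, ∑' k, f k s = ∑' k, ∫ s in Ioc (0:ℝ) t, f k s :=
    (integral_tsum_of_summable_integral_norm hint hsum).symm
  have hml : ∀ s : ℝ, (t - s) ^ (α - 1) * mittagLeffler α 1 (-((s / ε) ^ α)) = ∑' k, f k s := by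
    intro s
    rw [mittagLeffler, hf]
    exact (tsum_mul_left).symm
  have h5 : ∫ s in Ioc (0:ℝ) t, (t - s) ^ (α - 1) * mittagLeffler α 1 (-((s / ε) ^ α)) =
      ∑' k, ∫ s in Ioc (0:ℝ) t, f k s := by
    rw [← hswap]
    exact integral_congr_ae (ae_of_all _ fun s => hml s)
  have h6 : (∑' k, ∫ s in Ioc (0:ℝ) t, f k s) =
      -(Real.Gamma α * E) * ∑' k : ℕ, ((-y) ^ (k+1) / Real.Gamma (α * ((k:ℝ) + 1) + 1)) := by
    rw [← tsum_mul_left]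
    exact tsum_congr fun k => (hIk k).trans (by ring)
  have hyeq : (t / ε) ^ α = y := by rw [hdiv t ht.le]
  have hS : mittagLeffler α 1 (-y) =
      1 + ∑' k : ℕ, ((-y) ^ (k+1) / Real.Gamma (α * ((k:ℝ) + 1) + 1)) := by
    rw [mittagLeffler]
    have hsum2 : Summable (fun k : ℕ => (-y) ^ k / Real.Gamma (α * k + 1)) := by
      refine Summable.of_abs ?_
      refine ((summable_ml hα one_pos hy0).congr fun k => ?_)
      rw [abs_div, abs_pow, abs_neg, abs_of_nonneg hy0, abs_of_pos (hΓk k)]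
    rw [Summable.tsum_eq_zero_add hsum2]
    congr 1
    · norm_num [Real.Gamma_one]
    · exact tsum_congr fun k => by push_cast; ring_nf
  rw [intervalIntegral.integral_of_le ht.le, h5, h6, hyeq, hS]
  have hEneg : ε ^ (-α) = E⁻¹ := by rw [hE, ← Real.rpow_neg hε.le]
  rw [hEneg]
  field_simp
  ring
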